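/- arXiv:2505.09799 — 2 statements merged into one kernel-verified Lean document; each statement's English description precedes it below -/
import Mathlib

section
/- Consider the signed network coordination game on a network (V, W) with external field h and a partition V = R ∪ S (R, S disjoint) such that W_ij ≥ 0 for all i, j ∈ R. Assume there exists an action a ∈ {−1, +1} such that w_i^R + a·h_i ≥ w_i^S for every i ∈ R, and assume that the set N_S^(a𝟏) of Nash equilibria of the S-restricted game with the strategy profile of players in R frozen to the constant profile a𝟏 is nonempty. Then there exists a Nash equilibrium x* of the SNC game such that x*_i = a for every i ∈ R. -/
open Finset Function

noncomputable section

/-- The binary action set `A = {−1, +1}`, as a subtype of `ℝ`. -/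
abbrev Act : Type := {r : ℝ // r = 1 ∨ r = -1}

def onePt : Act := ⟨1, Or.inl rfl⟩

def negOnePt : Act := ⟨-1, Or.inr rfl⟩

def actMul (a b : Act) : Act :=
  ⟨(a : ℝ) * (b : ℝ), by rcases a.2 with h1 | h1 <;> rcases b.2 with h2 | h2 <;> norm_num [h1, h2]⟩

def actNeg (a : Act) : Act :=
  ⟨-(a : ℝ), by rcases a.2 with h1 | h1 <;> norm_num [h1]⟩

/-- Utility of player `i` in the SNC game on the network `(V, W)` with external field `h`. -/
def utility {V : Type*} [Fintype V] (W : V → V → ℝ) (h : V → ℝ) (i : V) (x : V → Act) : ℝ :=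
  h i * (x i : ℝ) + (x i : ℝ) * ∑ j, W i j * (x j : ℝ)

/-- Best response set of player `i` (depends only on `x_{−i}`). -/
def bestResponse {V : Type*} [Fintype V] [DecidableEq V] (W : V → V → ℝ) (h : V → ℝ)
    (i : V) (x : V → Act) : Set Act :=
  {a | ∀ b : Act, utility W h i (Function.update x i b) ≤ utility W h i (Function.update x i a)}

/-- Nash equilibrium of the SNC game. -/
def IsNash {V : Type*} [Fintype V] [DecidableEq V] (W : V → V → ℝ) (h : V → ℝ)
    (x : V → Act) : Prop :=
  ∀ i, x i ∈ bestResponse W h i x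

/-- One step of a best-response path. -/
def BRStep {V : Type*} [Fintype V] [DecidableEq V] (W : V → V → ℝ) (h : V → ℝ)
    (x y : V → Act) : Prop :=
  ∃ i, (∀ j, j ≠ i → y j = x j) ∧ y i ≠ x i ∧ y i ∈ bestResponse W h i x

def GloballyBRReachable {V : Type*} [Fintype V] [DecidableEq V] (W : V → V → ℝ) (h : V → ℝ)
    (X : Set (V → Act)) : Prop :=
  ∀ x : V → Act, ∃ y ∈ X, Relation.ReflTransGen (BRStep W h) x y

def BRInvariant {V : Type*} [Fintype V] [DecidableEq V] (W : V → V → ℝ) (h : V → ℝ)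
    (X : Set (V → Act)) : Prop :=
  ∀ x ∈ X, ∀ y, Relation.ReflTransGen (BRStep W h) x y → y ∈ X

def GloballyBRStable {V : Type*} [Fintype V] [DecidableEq V] (W : V → V → ℝ) (h : V → ℝ)
    (X : Set (V → Act)) : Prop :=
  GloballyBRReachable W h X ∧ BRInvariant W h X

/-- Structural balance of a signed weight matrix. -/
def StructurallyBalanced {V : Type*} (W : V → V → ℝ) : Prop :=
  ∃ P : Set V, (∀ i j, (i ∈ P ↔ j ∈ P) → 0 ≤ W i j) ∧ (∀ i j, ¬(i ∈ P ↔ j ∈ P) → W i j ≤ 0)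

/-- `(h^−, h^+)`-indecomposability of a network. -/
def Indecomposable {V : Type*} [Fintype V] [DecidableEq V] (W : V → V → ℝ)
    (hm hp : V → ℝ) : Prop :=
  ∀ P M : Finset V, P ∪ M = Finset.univ → Disjoint P M → P.Nonempty → M.Nonempty →
    (∃ i ∈ P, ∑ j ∈ P, |W i j| + hp i < ∑ j ∈ M, |W i j|) ∨
    (∃ i ∈ M, (∑ j ∈ M, |W i j|) - hm i < ∑ j ∈ P, |W i j|)

lemma util_update {V : Type*} [Fintype V] [DecidableEq V] (W : V → V → ℝ) (h : V → ℝ)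
    (hdiag : ∀ i, W i i = 0) (i : V) (x : V → Act) (b : Act) :
    utility W h i (Function.update x i b) = (b:ℝ) * (h i + ∑ j, W i j * (x j : ℝ)) := by
  unfold utility
  have hs : ∑ j, W i j * ((Function.update x i b j : Act) : ℝ) = ∑ j, W i j * (x j : ℝ) := by
    apply Finset.sum_congr rfl
    intro j _
    by_cases hj : j = i
    · subst hj; simp [hdiag]
    · simp [Function.update_of_ne hj]
  rw [hs, Function.update_self]
  ring

lemma mem_br_of_nonneg {V : Type*} [Fintype V] [DecidableEq V] (W : V → V → ℝ) (h : V → ℝ)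
    (hdiag : ∀ i, W i i = 0) (i : V) (x : V → Act)
    (hpos : 0 ≤ ((x i : ℝ)) * (h i + ∑ j, W i j * (x j : ℝ))) :
    x i ∈ bestResponse W h i x := by
  intro b
  rw [util_update W h hdiag, util_update W h hdiag]
  set c := h i + ∑ j, W i j * (x j : ℝ)
  rcases b.2 with hb | hb <;> rcases (x i).2 with hx | hx <;>
    rw [hb, hx] <;> rw [hx] at hpos <;> nlinarith

theorem stmt8 {V : Type*} [Fintype V] [DecidableEq V] [Nonempty V]
    (W : V → V → ℝ) (h : V → ℝ) (hdiag : ∀ i, W i i = 0)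
    (R S : Finset V) (hUnion : R ∪ S = Finset.univ) (hDisj : Disjoint R S)
    (hRpos : ∀ i ∈ R, ∀ j ∈ R, 0 ≤ W i j)
    (a : Act)
    (hcoh : ∀ i ∈ R, ∑ j ∈ S, |W i j| ≤ (∑ j ∈ R, |W i j|) + (a : ℝ) * h i)
    (hNS : ∃ z : {i // i ∈ S} → Act,
      IsNash (fun i j : {i // i ∈ S} => W i.1 j.1)
        (fun i : {i // i ∈ S} => h i.1 + ∑ j ∈ R, W i.1 j * (a : ℝ)) z) :
    ∃ x : V → Act, IsNash W h x ∧ ∀ i ∈ R, x i = a := by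
  classical
  obtain ⟨z, hz⟩ := hNS
  set x : V → Act := fun i => if hi : i ∈ S then z ⟨i, hi⟩ else a with hxdef
  have hxR : ∀ i ∈ R, x i = a := by
    intro i hi
    have hni : i ∉ S := fun hS => (Finset.disjoint_left.mp hDisj hi) hS
    simp [hxdef, hni]
  have hxS : ∀ i (hi : i ∈ S), x i = z ⟨i, hi⟩ := by intro i hi; simp [hxdef, hi]
  have ha2 : (a:ℝ) * (a:ℝ) = 1 := by rcases a.2 with h1|h1 <;> rw [h1] <;> norm_num
  have hxabs : ∀ j, |(x j : ℝ)| = 1 := by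
    intro j; rcases (x j).2 with h1|h1 <;> rw [h1] <;> norm_num
  refine ⟨x, ?_, hxR⟩
  intro i
  have hsplit : ∑ j, W i j * (x j : ℝ)
      = (∑ j ∈ R, W i j * (x j : ℝ)) + ∑ j ∈ S, W i j * (x j : ℝ) := by
    rw [← Finset.sum_union hDisj, hUnion]
  have hRsum : ∑ j ∈ R, W i j * (x j : ℝ) = (∑ j ∈ R, W i j) * (a:ℝ) := by
    rw [Finset.sum_mul]
    exact Finset.sum_congr rfl fun j hj => by rw [hxR j hj]
  by_cases hiR : i ∈ R
  · apply mem_br_of_nonneg W h hdiag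
    rw [hxR i hiR, hsplit, hRsum]
    set T := ∑ j ∈ S, W i j * (x j : ℝ) with hT
    have hTle : |T| ≤ ∑ j ∈ S, |W i j| := by
      refine (Finset.abs_sum_le_sum_abs _ _).trans (le_of_eq ?_)
      exact Finset.sum_congr rfl fun j _ => by rw [abs_mul, hxabs, mul_one]
    have hAeq : ∑ j ∈ R, W i j = ∑ j ∈ R, |W i j| :=
      Finset.sum_congr rfl fun j hj => (abs_of_nonneg (hRpos i hiR j hj)).symm
    have hc := hcoh i hiR
    have h1 : -(∑ j ∈ S, |W i j|) ≤ (a:ℝ) * T := by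
      have : |(a:ℝ) * T| = |T| := by
        rw [abs_mul]
        rcases a.2 with h1|h1 <;> rw [h1] <;> norm_num
      nlinarith [neg_abs_le ((a:ℝ) * T), hTle, abs_nonneg T]
    have expand : (a:ℝ) * (h i + ((∑ j ∈ R, W i j) * (a:ℝ) + T))
        = (a:ℝ) * h i + (∑ j ∈ R, W i j) * ((a:ℝ)*(a:ℝ)) + (a:ℝ) * T := by ring
    rw [expand, ha2, mul_one, hAeq]
    linarith [h1, hc]
  · have hiS : i ∈ S := by
      have : i ∈ R ∪ S := by rw [hUnion]; exact Finset.mem_univ i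
      rcases Finset.mem_union.mp this with h' | h'
      · exact absurd h' hiR
      · exact h'
    apply mem_br_of_nonneg W h hdiag
    set ι : {k // k ∈ S} := ⟨i, hiS⟩
    have hdiag' : ∀ j : {k // k ∈ S}, (fun i j : {k // k ∈ S} => W i.1 j.1) j j = 0 :=
      fun j => hdiag j.1
    have hbr := hz ι
    have key : ∀ b : Act, (b:ℝ) * ((h i + ∑ j ∈ R, W i j * (a:ℝ)) +
        ∑ j : {k // k ∈ S}, W i j.1 * (z j : ℝ)) ≤
        ((z ι : ℝ)) * ((h i + ∑ j ∈ R, W i j * (a:ℝ)) +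
        ∑ j : {k // k ∈ S}, W i j.1 * (z j : ℝ)) := by
      intro b
      have := hbr b
      rwa [util_update _ _ hdiag', util_update _ _ hdiag'] at this
    have hpos : 0 ≤ ((z ι : ℝ)) * ((h i + ∑ j ∈ R, W i j * (a:ℝ)) +
        ∑ j : {k // k ∈ S}, W i j.1 * (z j : ℝ)) := by
      have := key ⟨-(z ι : ℝ), by rcases (z ι).2 with h1|h1 <;> rw [h1] <;> norm_num⟩
      simp only at this
      nlinarith [this]
    have hSsum : ∑ j ∈ S, W i j * (x j : ℝ) = ∑ j : {k // k ∈ S}, W i j.1 * (z j : ℝ) := by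
      rw [Finset.univ_eq_attach, ← Finset.sum_attach S (fun j => W i j * (x j : ℝ))]
      exact Finset.sum_congr rfl fun j _ => by rw [hxS j.1 j.2]
    have hxi : x i = z ι := hxS i hiS
    rw [hxi, hsplit, hRsum, hSsum]
    have hRa : (∑ j ∈ R, W i j) * (a:ℝ) = ∑ j ∈ R, W i j * (a:ℝ) := by
      rw [Finset.sum_mul]
    rw [hRa]
    linarith [hpos]
end
end

section
/- Consider the signed network coordination game on a network (V, W) with external field h and a partition V = R ∪ S (R, S disjoint) such that both the subnetwork (R, W_{RR}) and the subnetwork (S, W_{SS}) are structurally balanced. If there exists τ ∈ {−1,+1}^R such that τ_i W_ij τ_j ≥ 0 for all i, j ∈ R and w_i^R + τ_i h_i ≥ w_i^S for every i ∈ R, then there exists a Nash equilibrium x* of the SNC game such that x*_i = τ_i for every i ∈ R. -/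
open Finset Function

noncomputable section

/-
Flipping the actions of a structurally balanced network along its bipartition (a gauge
transformation) turns it into a network with nonnegative weights, i.e. a supermodular game.
There the map sending a set `A` of players to those whose local field is nonnegative when `A`
plays `+1` and the others `−1` is monotone, and its least fixed point is an equilibrium.
Applying this on `S` with the field shifted by the fixed actions `τ` on `R` equilibrates `S`;
the players of `R` keep `τ`, because their coordinated weight inside `R` and the field `τ_i h_i`
outweigh everything `S` can do against them.
-/

lemma Act.abs_coe (a : Act) : |(a : ℝ)| = 1 := by
  rcases a.2 with h | h <;> simp [h]

open Classical in
def signOfMem {U : Type*} (A : Set U) (i : U) : Act :=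
  if i ∈ A then onePt else negOnePt

open Classical in
lemma coe_signOfMem {U : Type*} (A : Set U) (i : U) :
    (signOfMem A i : ℝ) = if i ∈ A then 1 else -1 := by
  unfold signOfMem; split_ifs <;> rfl

def localField {U : Type*} [Fintype U] (W : U → U → ℝ) (h : U → ℝ) (x : U → Act)
    (i : U) : ℝ :=
  h i + ∑ j, W i j * (x j : ℝ)

section Network

variable {V : Type*} [Fintype V] [DecidableEq V] {W : V → V → ℝ} (h : V → ℝ)

lemma utility_update (hdiag : ∀ i, W i i = 0) (i : V) (x : V → Act) (a : Act) :
    utility W h i (update x i a) = a * localField W h x i := by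
  have hsum : ∑ j, W i j * (update x i a j : ℝ) = ∑ j, W i j * (x j : ℝ) := by
    refine Finset.sum_congr rfl fun j _ => ?_
    rcases eq_or_ne j i with rfl | hj
    · simp [hdiag]
    · rw [update_of_ne hj]
  rw [utility, localField, update_self, hsum]
  ring

lemma mem_bestResponse_of_nonneg_mul_localField (hdiag : ∀ i, W i i = 0) {i : V} {x : V → Act}
    (hx : 0 ≤ (x i : ℝ) * localField W h x i) : x i ∈ bestResponse W h i x := by
  intro b
  rw [utility_update h hdiag, utility_update h hdiag]
  calc (b : ℝ) * localField W h x i ≤ |(b : ℝ) * localField W h x i| := le_abs_self _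
    _ = |(x i : ℝ) * localField W h x i| := by rw [abs_mul, abs_mul, Act.abs_coe, Act.abs_coe]
    _ = (x i : ℝ) * localField W h x i := abs_of_nonneg hx

variable {R S : Finset V}

lemma localField_eq_add_sum_add_sum (hUnion : R ∪ S = univ) (hDisj : Disjoint R S)
    (x : V → Act) (i : V) :
    localField W h x i =
      h i + ∑ j ∈ R, W i j * (x j : ℝ) + ∑ j ∈ S, W i j * (x j : ℝ) := by
  rw [localField, add_assoc, ← Finset.sum_union hDisj, hUnion]

lemma le_mul_localField_of_coordinated (hUnion : R ∪ S = univ) (hDisj : Disjoint R S)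
    {x : V → Act} {i : V} (hR : ∀ j ∈ R, 0 ≤ (x i : ℝ) * W i j * x j) :
    (x i : ℝ) * h i + ∑ j ∈ R, |W i j| - ∑ j ∈ S, |W i j| ≤
      (x i : ℝ) * localField W h x i := by
  have habs : ∀ j, |(x i : ℝ) * W i j * x j| = |W i j| := fun j => by
    rw [abs_mul, abs_mul, Act.abs_coe, Act.abs_coe, one_mul, mul_one]
  have hRsum : ∑ j ∈ R, (x i : ℝ) * W i j * x j = ∑ j ∈ R, |W i j| :=
    Finset.sum_congr rfl fun j hj => by rw [← habs j, abs_of_nonneg (hR j hj)]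
  have hSsum : -∑ j ∈ S, |W i j| ≤ ∑ j ∈ S, (x i : ℝ) * W i j * x j := by
    rw [← Finset.sum_neg_distrib]
    exact Finset.sum_le_sum fun j _ => habs j ▸ neg_abs_le _
  have hexpand : (x i : ℝ) * localField W h x i = (x i : ℝ) * h i
      + ∑ j ∈ R, (x i : ℝ) * W i j * x j + ∑ j ∈ S, (x i : ℝ) * W i j * x j := by
    simp only [localField_eq_add_sum_add_sum h hUnion hDisj, mul_add, Finset.mul_sum, mul_assoc]
  linarith

end Network

lemma StructurallyBalanced.exists_gauge {U : Type*} {W : U → U → ℝ}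
    (hW : StructurallyBalanced W) :
    ∃ σ : U → Act, ∀ i j, 0 ≤ (σ i : ℝ) * W i j * σ j := by
  classical
  obtain ⟨P, hsame, hcross⟩ := hW
  refine ⟨signOfMem P, fun i j => ?_⟩
  simp only [coe_signOfMem]
  by_cases hi : i ∈ P <;> by_cases hj : j ∈ P
  · simpa [hi, hj] using hsame i j (iff_of_true hi hj)
  · simpa [hi, hj] using hcross i j (by tauto)
  · simpa [hi, hj] using hcross i j (by tauto)
  · simpa [hi, hj] using hsame i j (iff_of_false hi hj)

section Supermodular

variable {U : Type*} [Fintype U]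

theorem exists_nonneg_mul_localField_of_nonneg {c : U → U → ℝ} (hc : ∀ i j, 0 ≤ c i j)
    (d : U → ℝ) : ∃ x : U → Act, ∀ i, 0 ≤ (x i : ℝ) * localField c d x i := by
  have hmono : Monotone fun A : Set U => {i | 0 ≤ localField c d (signOfMem A) i} := by
    intro A B hAB i (hi : 0 ≤ localField c d (signOfMem A) i)
    show 0 ≤ localField c d (signOfMem B) i
    refine le_trans hi (add_le_add_right (Finset.sum_le_sum fun j _ => ?_) _)
    refine mul_le_mul_of_nonneg_left ?_ (hc i j)
    simp only [coe_signOfMem]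
    split_ifs with hA hB hB <;> first | exact absurd (hAB hA) hB | norm_num
  set A := OrderHom.lfp ⟨_, hmono⟩
  have hA : ∀ i, i ∈ A ↔ 0 ≤ localField c d (signOfMem A) i := fun i =>
    Set.ext_iff.mp (OrderHom.map_lfp ⟨_, hmono⟩).symm i
  classical
  refine ⟨signOfMem A, fun i => ?_⟩
  rw [coe_signOfMem]
  split_ifs with hi
  · simpa using (hA i).mp hi
  · have := (hA i).not.mp hi
    nlinarith

theorem StructurallyBalanced.exists_nonneg_mul_localField {W : U → U → ℝ}
    (hW : StructurallyBalanced W) (h : U → ℝ) :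
    ∃ x : U → Act, ∀ i, 0 ≤ (x i : ℝ) * localField W h x i := by
  obtain ⟨σ, hσ⟩ := hW.exists_gauge
  obtain ⟨z, hz⟩ := exists_nonneg_mul_localField_of_nonneg hσ fun i => σ i * h i
  refine ⟨fun i => actMul (σ i) (z i), fun i => ?_⟩
  convert hz i using 1
  simp only [localField, actMul, mul_add, Finset.mul_sum]
  congr 1
  · ring
  · exact Finset.sum_congr rfl fun j _ => by ring

end Supermodular

theorem stmt10_general {V : Type*} [Fintype V] [DecidableEq V]
    (W : V → V → ℝ) (h : V → ℝ) (hdiag : ∀ i, W i i = 0)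
    (R S : Finset V) (hUnion : R ∪ S = Finset.univ) (hDisj : Disjoint R S)
    (hsbS : StructurallyBalanced (fun i j : {i // i ∈ S} => W i.1 j.1))
    (τ : {i // i ∈ R} → Act)
    (hτ : ∀ i j : {i // i ∈ R}, 0 ≤ (τ i : ℝ) * W i.1 j.1 * (τ j : ℝ))
    (hcoh : ∀ i : {i // i ∈ R},
      ∑ j ∈ S, |W i.1 j| ≤ (∑ j ∈ R, |W i.1 j|) + (τ i : ℝ) * h i.1) :
    ∃ x : V → Act, IsNash W h x ∧ ∀ i : {i // i ∈ R}, x i.1 = τ i := by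
  have hS : ∀ {j}, j ∉ R → j ∈ S := fun {j} hj =>
    (Finset.mem_union.mp (hUnion ▸ Finset.mem_univ j)).resolve_left hj
  obtain ⟨y, hy⟩ := hsbS.exists_nonneg_mul_localField fun i => h i + ∑ j : R, W i j * τ j
  let x : V → Act := fun j => if hj : j ∈ R then τ ⟨j, hj⟩ else y ⟨j, hS hj⟩
  have hxR : ∀ j : R, x j = τ j := fun j => dif_pos j.2
  have hxS : ∀ j : S, x j = y j := fun j => dif_neg (Finset.disjoint_right.mp hDisj j.2)
  refine ⟨x, fun i => mem_bestResponse_of_nonneg_mul_localField h hdiag ?_, hxR⟩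
  by_cases hi : i ∈ R
  · have hcoord := le_mul_localField_of_coordinated h hUnion hDisj (x := x) (i := i)
      fun j hj => hxR ⟨i, hi⟩ ▸ hxR ⟨j, hj⟩ ▸ hτ ⟨i, hi⟩ ⟨j, hj⟩
    rw [hxR ⟨i, hi⟩] at hcoord ⊢
    linarith [hcoh ⟨i, hi⟩]
  · convert hy ⟨i, hS hi⟩ using 1
    rw [hxS ⟨i, hS hi⟩, localField_eq_add_sum_add_sum h hUnion hDisj, localField,
      ← Finset.sum_coe_sort R, ← Finset.sum_coe_sort S]
    simp only [hxR, hxS, add_assoc]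

theorem stmt10 {V : Type*} [Fintype V] [DecidableEq V] [Nonempty V]
    (W : V → V → ℝ) (h : V → ℝ) (hdiag : ∀ i, W i i = 0)
    (R S : Finset V) (hUnion : R ∪ S = Finset.univ) (hDisj : Disjoint R S)
    (hsbR : StructurallyBalanced (fun i j : {i // i ∈ R} => W i.1 j.1))
    (hsbS : StructurallyBalanced (fun i j : {i // i ∈ S} => W i.1 j.1))
    (τ : {i // i ∈ R} → Act)
    (hτ : ∀ i j : {i // i ∈ R}, 0 ≤ (τ i : ℝ) * W i.1 j.1 * (τ j : ℝ))
    (hcoh : ∀ i : {i // i ∈ R},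
      ∑ j ∈ S, |W i.1 j| ≤ (∑ j ∈ R, |W i.1 j|) + (τ i : ℝ) * h i.1) :
    ∃ x : V → Act, IsNash W h x ∧ ∀ i : {i // i ∈ R}, x i.1 = τ i :=
  stmt10_general W h hdiag R S hUnion hDisj hsbS τ hτ hcoh
end
end
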